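/- (Sum rule for subdifferentials) Let X₁ be a semidivisible additive commutative group, X₂ an additive commutative group, T : X₁ → X₂ additive, and f : X₁ → ℝ, g : X₂ → ℝ convex. Then for every x₀ ∈ X₁ and every additive φ : X₁ → ℝ: φ ∈ ∂(f + g ∘ T)(x₀) if and only if there exist a ∈ ∂f(x₀) and b ∈ ∂g(T x₀) with φ = a + b ∘ T. (The 'if' direction holds for arbitrary f and g without convexity or semidivisibility.) -/

import Mathlib

/-! If `φ ∈ ∂(f + g ∘ T)(x₀)`, the perturbation function
`v k = ⨅ h, f (x₀ + h) + g (T (x₀ + h) + k) - φ h` satisfies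
`∑ mᵢ * v zᵢ ≥ (∑ mᵢ) * (f x₀ + g (T x₀))` whenever `∑ mᵢ • zᵢ = 0`. To prove it one
averages the `hᵢ`; the division this needs is supplied by semidivisibility once the weights are
padded with copies of `x₀` up to a power of `p`, after which convexity of `f` and `g` applies.

A function `C` that is nonnegative on integer relations in this sense has an additive minorant:
by Hahn–Banach on the free real vector space over the group, the zero functional on the span of
the additivity defects `e (x + y) - e x - e y` extends below a piecewise-linear gauge built from
`C`. The gauge is nonnegative on integer combinations of defects by hypothesis, hence on real ones
by homogeneity and continuity. An additive `b ≤ v - (f x₀ + g (T x₀))` is then a subgradient of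
`g` at `T x₀` (take `h = 0`), and `φ - b ∘ T` one of `f` at `x₀` (take `k = -T h`). -/

/-- A real-valued function on an additive commutative monoid is convex. -/
def RConvexFn {X : Type*} [AddCommMonoid X] (f : X → ℝ) : Prop :=
  ∀ (n : ℕ), 0 < n → ∀ m : Fin n → ℕ, (∀ i, 0 < m i) →
    ∀ (xs : Fin n → X) (x : X), (∑ i, m i) • x = ∑ i, m i • xs i →
      ((∑ i, m i : ℕ) : ℝ) * f x ≤ ∑ i, (m i : ℝ) * f (xs i)

/-- The subdifferential of `f` at `x₀`: additive maps `a : X → ℝ` with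
`f(x₀) + a(h) ≤ f(x₀ + h)` for all `h`. -/
def subdiff {X : Type*} [AddCommGroup X] (f : X → ℝ) (x₀ : X) : Set (X → ℝ) :=
  {a | (∀ x y, a (x + y) = a x + a y) ∧ ∀ h, f x₀ + a h ≤ f (x₀ + h)}

open Finset Filter Topology

theorem natAbs_nsmul_ite {G : Type*} [AddGroup G] (t : ℤ) (x : G) :
    t.natAbs • (if 0 ≤ t then x else -x) = t • x := by
  rcases le_or_gt 0 t with ht | ht
  · rw [if_pos ht, ← natCast_zsmul, Int.natAbs_of_nonneg ht]
  · rw [if_neg ht.not_ge, ← natCast_zsmul, Int.ofNat_natAbs_of_nonpos ht.le, zsmul_neg, neg_zsmul,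
      neg_neg]

section Minorant

variable {X : Type*} [AddCommGroup X] {C : X → ℝ}

def NonnegOnRelations (C : X → ℝ) : Prop :=
  ∀ (n : ℕ) (m : Fin n → ℕ), (∀ i, 0 < m i) → ∀ z : Fin n → X,
    ∑ i, m i • z i = 0 → 0 ≤ ∑ i, (m i : ℝ) * C (z i)

theorem NonnegOnRelations.add_neg (hC : NonnegOnRelations C) (x : X) : 0 ≤ C x + C (-x) := by
  simpa [Fin.sum_univ_two] using hC 2 1 (fun _ => one_pos) ![x, -x] (by simp [Fin.sum_univ_two])

theorem NonnegOnRelations.sum_finset (hC : NonnegOnRelations C) {ι : Type*} {s : Finset ι}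
    {m : ι → ℕ} (hm : ∀ i ∈ s, 0 < m i) {z : ι → X} (hz : ∑ i ∈ s, m i • z i = 0) :
    0 ≤ ∑ i ∈ s, (m i : ℝ) * C (z i) := by
  let e := s.equivFin.symm
  rw [← sum_coe_sort, ← e.sum_comp]
  refine hC _ _ (fun i => hm _ (e i).2) _ ?_
  exact (e.sum_comp fun i : s => m i • z i).trans ((sum_coe_sort s _).trans hz)

/-- On `t • single x 1` this is `t * C x` for `t ≥ 0` and `|t| * C (-x)` for `t < 0`, so linear
functionals below it restrict to maps below `C`. -/
noncomputable def minorantGauge (C : X → ℝ) (w : X →₀ ℝ) : ℝ :=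
  w.sum fun x t => max (t * C x) (-(t * C (-x)))

theorem minorantGauge_eq_sum (C : X → ℝ) {w : X →₀ ℝ} {s : Finset X} (hs : w.support ⊆ s) :
    minorantGauge C w = ∑ x ∈ s, max (w x * C x) (-(w x * C (-x))) :=
  Finsupp.sum_of_support_subset w hs _ fun _ _ => by simp

theorem minorantGauge_add_le (C : X → ℝ) (w v : X →₀ ℝ) :
    minorantGauge C (w + v) ≤ minorantGauge C w + minorantGauge C v := by
  classical
  rw [minorantGauge_eq_sum C Finsupp.support_add,
    minorantGauge_eq_sum C subset_union_left, minorantGauge_eq_sum C subset_union_right,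
    ← sum_add_distrib]
  refine sum_le_sum fun x _ => max_le ?_ ?_
  · rw [Finsupp.add_apply, add_mul]
    exact add_le_add (le_max_left _ _) (le_max_left _ _)
  · rw [Finsupp.add_apply, add_mul, neg_add]
    exact add_le_add (le_max_right _ _) (le_max_right _ _)

theorem minorantGauge_smul (C : X → ℝ) {c : ℝ} (hc : 0 ≤ c) (w : X →₀ ℝ) :
    minorantGauge C (c • w) = c * minorantGauge C w := by
  rw [minorantGauge_eq_sum C Finsupp.support_smul, minorantGauge_eq_sum C subset_rfl, mul_sum]
  refine sum_congr rfl fun x _ => ?_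
  rw [Finsupp.smul_apply, smul_eq_mul, mul_max_of_nonneg _ _ hc]
  ring_nf

theorem minorantGauge_single {x : X} (hC : 0 ≤ C x + C (-x)) :
    minorantGauge C (Finsupp.single x 1) = C x := by
  rw [minorantGauge_eq_sum C Finsupp.support_single_subset, sum_singleton, Finsupp.single_eq_same,
    one_mul, max_eq_left (by linarith)]

theorem max_intCast_mul_eq_natAbs_mul {x : X} (hC : 0 ≤ C x + C (-x)) (t : ℤ) :
    max (t * C x) (-(t * C (-x))) = t.natAbs * C (if 0 ≤ t then x else -x) := by
  rcases le_or_gt 0 t with ht | ht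
  · have ht' : (0 : ℝ) ≤ t := by exact_mod_cast ht
    rw [if_pos ht, Nat.cast_natAbs, Int.cast_abs, abs_of_nonneg ht', max_eq_left (by nlinarith)]
  · have ht' : (t : ℝ) < 0 := by exact_mod_cast ht
    rw [if_neg ht.not_ge, Nat.cast_natAbs, Int.cast_abs, abs_of_neg ht',
      max_eq_right (by nlinarith)]
    ring

theorem NonnegOnRelations.minorantGauge_intCast_nonneg (hC : NonnegOnRelations C) {v : X →₀ ℤ}
    (hv : Finsupp.linearCombination ℤ id v = 0) :
    0 ≤ minorantGauge C (v.mapRange Int.cast Int.cast_zero) := by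
  rw [minorantGauge_eq_sum C Finsupp.support_mapRange]
  simp only [Finsupp.mapRange_apply, max_intCast_mul_eq_natAbs_mul (hC.add_neg _)]
  refine hC.sum_finset (fun x hx => Int.natAbs_pos.2 (Finsupp.mem_support_iff.1 hx)) ?_
  rw [← hv, Finsupp.linearCombination_apply, Finsupp.sum]
  exact sum_congr rfl fun x _ => natAbs_nsmul_ite (v x) x

noncomputable def additivityDefect (R : Type*) [Ring R] (x y : X) : X →₀ R :=
  Finsupp.single (x + y) 1 - Finsupp.single x 1 - Finsupp.single y 1

theorem mapRange_intCast_additivityDefect (x y : X) :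
    (additivityDefect ℤ x y).mapRange Int.cast Int.cast_zero = additivityDefect ℝ x y := by
  simp [additivityDefect, Finsupp.mapRange_sub, Finsupp.mapRange_single]

theorem linearCombination_additivityDefect (x y : X) :
    Finsupp.linearCombination ℤ id (additivityDefect ℤ x y) = 0 := by
  simp [additivityDefect]

theorem continuous_minorantGauge_sum_smul {ι : Type*} [Fintype ι] (C : X → ℝ)
    (v : ι → X →₀ ℝ) : Continuous fun c : ι → ℝ => minorantGauge C (∑ i, c i • v i) := by
  classical
  have hs : ∀ c : ι → ℝ, (∑ i, c i • v i).support ⊆ univ.biUnion fun i => (v i).support :=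
    fun c => Finsupp.support_finsetSum.trans (biUnion_mono fun i _ => Finsupp.support_smul)
  simp_rw [minorantGauge_eq_sum C (hs _), Finsupp.finsetSum_apply, Finsupp.smul_apply,
    smul_eq_mul]
  fun_prop

theorem tendsto_intFloor_mul_div (a : ℝ) :
    Tendsto (fun M : ℕ => (⌊M * a⌋ : ℝ) / M) atTop (𝓝 a) := by
  have hlow : Tendsto (fun M : ℕ => a - 1 / (M : ℝ)) atTop (𝓝 a) := by
    simpa using tendsto_const_nhds.sub (tendsto_one_div_atTop_nhds_zero_nat (𝕜 := ℝ))
  refine tendsto_of_tendsto_of_tendsto_of_le_of_le' hlow tendsto_const_nhds ?_ ?_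
  all_goals
    filter_upwards [eventually_gt_atTop 0] with M hM
    have hM' : (0 : ℝ) < M := by exact_mod_cast hM
  · rw [sub_le_iff_le_add, ← add_div, le_div_iff₀ hM']
    linarith [Int.lt_floor_add_one ((M : ℝ) * a), mul_comm a M]
  · rw [div_le_iff₀ hM']
    linarith [Int.floor_le ((M : ℝ) * a), mul_comm a M]

theorem NonnegOnRelations.minorantGauge_sum_smul_additivityDefect_nonneg
    (hC : NonnegOnRelations C) {ι : Type*} [Fintype ι] (d : ι → X × X) (c : ι → ℝ) :
    0 ≤ minorantGauge C (∑ i, c i • additivityDefect ℝ (d i).1 (d i).2) := by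
  set θ := fun c : ι → ℝ => minorantGauge C (∑ i, c i • additivityDefect ℝ (d i).1 (d i).2)
  have hint : ∀ z : ι → ℤ, 0 ≤ θ fun i => z i := by
    intro z
    have hcast : ∑ i, (z i : ℝ) • additivityDefect ℝ (d i).1 (d i).2 =
        (∑ i, z i • additivityDefect ℤ (d i).1 (d i).2).mapRange Int.cast Int.cast_zero := by
      ext x
      simp [← mapRange_intCast_additivityDefect, Finsupp.finsetSum_apply]
    simp only [θ, hcast]
    refine hC.minorantGauge_intCast_nonneg ?_
    simp [map_sum, linearCombination_additivityDefect]
  have hrat : ∀ᶠ M : ℕ in atTop, 0 ≤ θ fun i => (⌊M * c i⌋ : ℝ) / M := by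
    filter_upwards with M
    have : (fun i => (⌊M * c i⌋ : ℝ) / M) = (M : ℝ)⁻¹ • fun i => (⌊M * c i⌋ : ℝ) := by
      ext i; simp [div_eq_inv_mul]
    simp only [θ, this, Pi.smul_apply, smul_assoc, ← smul_sum]
    rw [minorantGauge_smul C (by positivity)]
    exact mul_nonneg (by positivity) (hint fun i => ⌊M * c i⌋)
  exact ge_of_tendsto ((continuous_minorantGauge_sum_smul C _).continuousAt.tendsto.comp
    (tendsto_pi_nhds.2 fun i => tendsto_intFloor_mul_div (c i))) hrat

theorem NonnegOnRelations.minorantGauge_nonneg_of_mem_span (hC : NonnegOnRelations C)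
    {w : X →₀ ℝ}
    (hw : w ∈ Submodule.span ℝ (Set.range fun d : X × X => additivityDefect ℝ d.1 d.2)) :
    0 ≤ minorantGauge C w := by
  obtain ⟨n, c, v, rfl⟩ := Submodule.mem_span_set'.1 hw
  choose d hd using fun i => (v i).2
  simp only [← hd]
  exact hC.minorantGauge_sum_smul_additivityDefect_nonneg d c

theorem NonnegOnRelations.exists_addMonoidHom_le (hC : NonnegOnRelations C) :
    ∃ b : X →+ ℝ, ∀ x, b x ≤ C x := by
  obtain ⟨L, hL, hLC⟩ := exists_extension_of_le_sublinear
    ⟨Submodule.span ℝ (Set.range fun d : X × X => additivityDefect ℝ d.1 d.2), 0⟩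
    (minorantGauge C) (fun c hc => minorantGauge_smul C hc.le) (minorantGauge_add_le C)
    fun w => hC.minorantGauge_nonneg_of_mem_span w.2
  refine ⟨AddMonoidHom.mk' (fun x => L (Finsupp.single x 1)) fun x y => ?_, fun x => ?_⟩
  · have h0 : L (additivityDefect ℝ x y) = 0 := hL ⟨_, Submodule.subset_span ⟨(x, y), rfl⟩⟩
    simp only [additivityDefect, map_sub] at h0
    linarith
  · simpa [minorantGauge_single (hC.add_neg x)] using hLC (Finsupp.single x 1)

end Minorant

theorem RConvexFn.mul_le_of_nsmul_eq {X : Type*} [AddCommMonoid X] {f : X → ℝ}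
    (hf : RConvexFn f) {r n : ℕ} (hr : 0 < r) {m : Fin n → ℕ} (hm : ∀ i, 0 < m i)
    (x : X) {u : X} {h : Fin n → X} (hu : (r + ∑ i, m i) • u = ∑ i, m i • h i) :
    ((r + ∑ i, m i : ℕ) : ℝ) * f (x + u) ≤ r * f x + ∑ i, (m i : ℝ) * f (x + h i) := by
  have key := hf (n + 1) n.succ_pos (Fin.cons r m) (Fin.cases hr hm)
    (Fin.cons x fun i => x + h i) (x + u)
  simp only [Fin.sum_univ_succ, Fin.cons_zero, Fin.cons_succ] at key
  push_cast at key ⊢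
  refine key ?_
  simp only [smul_add, sum_add_distrib, hu, ← sum_smul, ← add_assoc, ← add_nsmul]

theorem exists_lt_surjective_nsmul {X : Type*} [AddMonoid X] {p : ℕ} (hp : 1 < p)
    (h : Function.Surjective fun x : X => p • x) (N : ℕ) :
    ∃ M, N < M ∧ Function.Surjective fun x : X => M • x :=
  ⟨p ^ N, N.lt_pow_self hp, by simpa only [smul_iterate] using h.iterate N⟩

theorem le_sum_mul_ciInf {ι β : Type*} [Fintype ι] [Nonempty β] {F : ι → β → ℝ} {w : ι → ℝ}
    (hw : ∀ i, 0 ≤ w i) {a : ℝ} (h : ∀ y : ι → β, a ≤ ∑ i, w i * F i (y i)) :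
    a ≤ ∑ i, w i * ⨅ y, F i y := by
  refine le_of_forall_pos_lt_add fun ε hε => ?_
  set W := ∑ i, w i
  have hW : 0 < W + 1 := by linarith [sum_nonneg fun i (_ : i ∈ univ) => hw i]
  have hδ : 0 < ε / (W + 1) := div_pos hε hW
  choose y hy using fun i => exists_lt_of_ciInf_lt (lt_add_of_pos_right (⨅ y, F i y) hδ)
  calc a ≤ ∑ i, w i * F i (y i) := h y
    _ ≤ ∑ i, w i * ((⨅ y, F i y) + ε / (W + 1)) :=
        sum_le_sum fun i _ => mul_le_mul_of_nonneg_left (hy i).le (hw i)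
    _ = (∑ i, w i * ⨅ y, F i y) + W * (ε / (W + 1)) := by
        simp only [W, mul_add, sum_add_distrib, sum_mul]
    _ < (∑ i, w i * ⨅ y, F i y) + ε := by
        have : W * (ε / (W + 1)) + ε / (W + 1) = ε := by
          rw [← add_one_mul, mul_div_cancel₀ _ hW.ne']
        linarith

section SumRule

variable {X₁ X₂ : Type*} [AddCommGroup X₁] [AddCommGroup X₂] {f : X₁ → ℝ} {g : X₂ → ℝ}
  {x₀ : X₁}

theorem le_sum_of_mem_subdiff_add_comp (T : X₁ →+ X₂) (φ : X₁ →+ ℝ)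
    (hX : ∀ N : ℕ, ∃ M, N < M ∧ Function.Surjective fun x : X₁ => M • x)
    (hf : RConvexFn f) (hg : RConvexFn g) (hφ : ⇑φ ∈ subdiff (fun x => f x + g (T x)) x₀)
    {n : ℕ} {m : Fin n → ℕ} (hm : ∀ i, 0 < m i) {z : Fin n → X₂} (hz : ∑ i, m i • z i = 0)
    (h : Fin n → X₁) :
    ((∑ i, m i : ℕ) : ℝ) * (f x₀ + g (T x₀)) ≤
      ∑ i, (m i : ℝ) * (f (x₀ + h i) + g (T (x₀ + h i) + z i) - φ (h i)) := by
  obtain ⟨M, hNM, hM⟩ := hX (∑ i, m i)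
  obtain ⟨u, hu⟩ := hM (∑ i, m i • h i)
  obtain ⟨r, hr, rfl⟩ : ∃ r, 0 < r ∧ M = r + ∑ i, m i := ⟨M - ∑ i, m i, by omega, by omega⟩
  simp only at hu
  have hf' := hf.mul_le_of_nsmul_eq hr hm x₀ hu
  have hg' := hg.mul_le_of_nsmul_eq hr hm (T x₀) (u := T u) (h := fun i => T (h i) + z i) (by
    simp only [smul_add, sum_add_distrib, hz, add_zero, ← map_nsmul, ← map_sum, hu])
  have hφu : ((r + ∑ i, m i : ℕ) : ℝ) * φ u = ∑ i, (m i : ℝ) * φ (h i) := by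
    simp only [← nsmul_eq_mul, ← map_nsmul, hu, map_sum]
  have hsub := mul_le_mul_of_nonneg_left (hφ.2 u) (Nat.cast_nonneg (r + ∑ i, m i))
  simp only [map_add, add_assoc] at hsub hg' ⊢
  simp only [mul_sub, mul_add, sum_sub_distrib, sum_add_distrib]
  push_cast at *
  linarith

theorem exists_mem_subdiff_comp_of_mem_subdiff_add_comp (T : X₁ →+ X₂) (φ : X₁ →+ ℝ)
    (hX : ∀ N : ℕ, ∃ M, N < M ∧ Function.Surjective fun x : X₁ => M • x)
    (hf : RConvexFn f) (hg : RConvexFn g) (hφ : ⇑φ ∈ subdiff (fun x => f x + g (T x)) x₀) :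
    ∃ b : X₂ →+ ℝ, ⇑b ∈ subdiff g (T x₀) ∧ (fun x => φ x - b (T x)) ∈ subdiff f x₀ := by
  set c := f x₀ + g (T x₀)
  set F : X₂ → X₁ → ℝ := fun k h => f (x₀ + h) + g (T (x₀ + h) + k) - φ h
  have hbdd : ∀ k, BddBelow (Set.range (F k)) := by
    refine fun k => ⟨2 * c - F (-k) 0, ?_⟩
    rintro _ ⟨h, rfl⟩
    have := le_sum_of_mem_subdiff_add_comp T φ hX hf hg hφ (m := 1) (fun _ => one_pos)
      (z := ![k, -k]) (by simp [Fin.sum_univ_two]) ![h, 0]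
    simp only [Fin.sum_univ_two, Pi.one_apply, Matrix.cons_val_zero, Matrix.cons_val_one,
      Matrix.cons_val_fin_one, Nat.cast_add, Nat.cast_one, map_add, map_zero, add_zero] at this
    simp only [F, c, add_zero, map_zero, sub_zero, map_add]
    linarith
  have hrel : NonnegOnRelations fun k => (⨅ h, F k h) - c := by
    intro n m hm z hz
    have := le_sum_mul_ciInf (F := fun i => F (z i)) (fun i => (m i).cast_nonneg)
      (le_sum_of_mem_subdiff_add_comp T φ hX hf hg hφ hm hz)
    simp only [mul_sub, sum_sub_distrib, ← sum_mul]
    push_cast at this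
    linarith
  obtain ⟨b, hb⟩ := hrel.exists_addMonoidHom_le
  have hbF : ∀ k h, c + b k ≤ F k h := fun k h => by
    linarith [hb k, ciInf_le (hbdd k) h]
  refine ⟨b, ⟨map_add b, fun k => ?_⟩, ⟨fun x y => ?_, fun h => ?_⟩⟩
  · have := hbF k 0
    simp only [F, c, add_zero, map_zero, sub_zero] at this
    linarith
  · simp only [map_add]
    ring
  · have := hbF (-T h) h
    simp only [F, c, map_add, add_neg_cancel_right, map_neg] at this
    linarith

theorem add_comp_mem_subdiff (T : X₁ →+ X₂) {a : X₁ → ℝ} {b : X₂ → ℝ}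
    (ha : a ∈ subdiff f x₀) (hb : b ∈ subdiff g (T x₀)) :
    (fun x => a x + b (T x)) ∈ subdiff (fun x => f x + g (T x)) x₀ := by
  refine ⟨fun x y => ?_, fun h => ?_⟩
  · simp only [map_add, ha.1, hb.1]
    ring
  · simp only [map_add]
    linarith [ha.2 h, hb.2 (T h)]

end SumRule

theorem subdiff_sum_rule_general {X₁ X₂ : Type*} [AddCommGroup X₁] [AddCommGroup X₂]
    (hdiv : ∃ p : ℕ, p.Prime ∧ Function.Surjective fun x : X₁ => p • x)
    (T : X₁ → X₂) (hT : ∀ x y, T (x + y) = T x + T y)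
    (f : X₁ → ℝ) (g : X₂ → ℝ) (hf : RConvexFn f) (hg : RConvexFn g)
    (x₀ : X₁) (φ : X₁ → ℝ) :
    φ ∈ subdiff (fun x => f x + g (T x)) x₀ ↔
      ∃ a ∈ subdiff f x₀, ∃ b ∈ subdiff g (T x₀), φ = fun x => a x + b (T x) := by
  let T' : X₁ →+ X₂ := AddMonoidHom.mk' T hT
  constructor
  · intro hφ
    obtain ⟨p, hp, hsurj⟩ := hdiv
    obtain ⟨b, hb, ha⟩ := exists_mem_subdiff_comp_of_mem_subdiff_add_comp T'
      (AddMonoidHom.mk' φ hφ.1) (exists_lt_surjective_nsmul hp.one_lt hsurj) hf hg hφ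
    exact ⟨_, ha, b, hb, funext fun x => (sub_add_cancel _ _).symm⟩
  · rintro ⟨a, ha, b, hb, rfl⟩
    exact add_comp_mem_subdiff T' ha hb

/-- Sum rule for subdifferentials: for convex `f`, `g`, a semidivisible `X₁`, an additive
`T : X₁ → X₂` and an additive `φ : X₁ → ℝ`, one has `φ ∈ ∂(f + g∘T)(x₀)` iff
`φ = a + b∘T` with `a ∈ ∂f(x₀)` and `b ∈ ∂g(Tx₀)`. -/
theorem subdiff_sum_rule {X₁ X₂ : Type*} [AddCommGroup X₁] [AddCommGroup X₂]
    (hdiv : ∃ p : ℕ, p.Prime ∧ Function.Surjective fun x : X₁ => p • x)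
    (T : X₁ → X₂) (hT : ∀ x y, T (x + y) = T x + T y)
    (f : X₁ → ℝ) (g : X₂ → ℝ) (hf : RConvexFn f) (hg : RConvexFn g)
    (x₀ : X₁) (φ : X₁ → ℝ) (hφ : ∀ x y, φ (x + y) = φ x + φ y) :
    φ ∈ subdiff (fun x => f x + g (T x)) x₀ ↔
      ∃ a ∈ subdiff f x₀, ∃ b ∈ subdiff g (T x₀), φ = fun x => a x + b (T x) :=
  subdiff_sum_rule_general hdiv T hT f g hf hg x₀ φ
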